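/- arXiv:1605.01909 — 3 statements merged into one kernel-verified Lean document; each statement's English description precedes it below -/
import Mathlib

section
/- Fix β₁ > 0 with β₁ < 2/(3√3). Then for every β₂ > 0, f(β₁², β₂²) < 0, where f(x,y) = 27xy(x-y)² - 4(x³+y³) + 204xy(x+y) - 48(x² - 7xy + y² + 4x + 4y) - 256. -/
lemma key_stmt9 (x y : ℝ) (hx0 : 0 < x) (hx : x < 4/27) (hy : 0 < y) :
    27 * x * y * (x - y) ^ 2 - 4 * (x ^ 3 + y ^ 3)
      + 204 * x * y * (x + y) - 48 * (x ^ 2 - 7 * x * y + y ^ 2 + 4 * x + 4 * y) - 256 < 0 := by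
  have c3 : 27 * x - 4 < 0 := by linarith
  have c2 : 9 * x ^ 2 - 34 * x + 8 > 0 := by nlinarith [sq_nonneg x]
  have c1 : 27 * x ^ 3 + 204 * x ^ 2 + 336 * x - 192 < 0 := by
    nlinarith [sq_nonneg x, mul_pos hx0 hx0, mul_pos (mul_pos hx0 hx0) hx0]
  have t3 : (27 * x - 4) * y ^ 3 < 0 := mul_neg_of_neg_of_pos c3 (pow_pos hy 3)
  have t2 : (9 * x ^ 2 - 34 * x + 8) * y ^ 2 > 0 := mul_pos c2 (pow_pos hy 2)
  have t1 : (27 * x ^ 3 + 204 * x ^ 2 + 336 * x - 192) * y < 0 := mul_neg_of_neg_of_pos c1 hy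
  have t0 : (0:ℝ) < (x + 4) ^ 3 := by positivity
  nlinarith [t3, t2, t1, t0]

theorem stmt_9 (f : ℝ → ℝ → ℝ)
    (hf : ∀ x y, f x y = 27 * x * y * (x - y) ^ 2 - 4 * (x ^ 3 + y ^ 3)
      + 204 * x * y * (x + y) - 48 * (x ^ 2 - 7 * x * y + y ^ 2 + 4 * x + 4 * y) - 256)
    (β₁ : ℝ) (hβ₁ : 0 < β₁) (hβ₁' : β₁ < 2 / (3 * Real.sqrt 3)) :
    ∀ β₂ : ℝ, 0 < β₂ → f (β₁ ^ 2) (β₂ ^ 2) < 0 := by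
  intro β₂ hβ₂
  have hs : Real.sqrt 3 ^ 2 = 3 := Real.sq_sqrt (by norm_num)
  have hspos : (0:ℝ) < Real.sqrt 3 := Real.sqrt_pos.mpr (by norm_num)
  have hx : β₁ ^ 2 < 4/27 := by
    have h := pow_lt_pow_left₀ hβ₁' hβ₁.le (n := 2) (by norm_num)
    have : (2 / (3 * Real.sqrt 3)) ^ 2 = 4/27 := by
      field_simp
      nlinarith [hs]
    linarith [h.trans_eq this]
  rw [hf]
  exact key_stmt9 _ _ (pow_pos hβ₁ 2) hx (pow_pos hβ₂ 2)
end

section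
/- For β₁ = 0.5 and β₂ = 2.7, the point (β₁, β₂) satisfies f(β₁², β₂²) > 0 (so (β₁, β₂) ∈ Ω_∞), yet for γ = 5.6 the function exp(φ(x)) = ((x+1)² + 0.25)^{1/2} ((x-1)² + 7.29)^{2.8} is not convex on ℝ. -/
private lemma rpow_half_le {u p : ℝ} (hu : 0 ≤ u) (hp : 0 ≤ p) (h : u ≤ p ^ 2) :
    u ^ ((1 : ℝ) / 2) ≤ p := by
  have := Real.rpow_le_rpow hu h (by norm_num : (0:ℝ) ≤ 1/2)
  calc u ^ ((1:ℝ)/2) ≤ (p ^ 2) ^ ((1:ℝ)/2) := this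
    _ = p := by
      rw [← Real.rpow_natCast p 2, ← Real.rpow_mul hp]
      norm_num

private lemma le_rpow_half {u p : ℝ} (hp : 0 ≤ p) (h : p ^ 2 ≤ u) :
    p ≤ u ^ ((1 : ℝ) / 2) := by
  have hu : 0 ≤ u := le_trans (sq_nonneg p) h
  have := Real.rpow_le_rpow (sq_nonneg p) h (by norm_num : (0:ℝ) ≤ 1/2)
  calc p = (p ^ 2) ^ ((1:ℝ)/2) := by
        rw [← Real.rpow_natCast p 2, ← Real.rpow_mul hp]; norm_num
    _ ≤ u ^ ((1:ℝ)/2) := this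

private lemma rpow_28_le {v q : ℝ} (hv : 0 ≤ v) (hq : 0 ≤ q) (h : v ^ 14 ≤ q ^ 5) :
    v ^ (2.8 : ℝ) ≤ q := by
  have h1 : v ^ (2.8 : ℝ) = (v ^ 14 : ℝ) ^ ((1:ℝ)/5) := by
    rw [← Real.rpow_natCast v 14, ← Real.rpow_mul hv]
    norm_num
  have h2 : ((q ^ 5 : ℝ)) ^ ((1:ℝ)/5) = q := by
    rw [← Real.rpow_natCast q 5, ← Real.rpow_mul hq]
    norm_num
  rw [h1, ← h2]
  exact Real.rpow_le_rpow (pow_nonneg hv 14) h (by norm_num)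

private lemma le_rpow_28 {v q : ℝ} (hv : 0 ≤ v) (hq : 0 ≤ q) (h : q ^ 5 ≤ v ^ 14) :
    q ≤ v ^ (2.8 : ℝ) := by
  have h1 : v ^ (2.8 : ℝ) = (v ^ 14 : ℝ) ^ ((1:ℝ)/5) := by
    rw [← Real.rpow_natCast v 14, ← Real.rpow_mul hv]
    norm_num
  have h2 : ((q ^ 5 : ℝ)) ^ ((1:ℝ)/5) = q := by
    rw [← Real.rpow_natCast q 5, ← Real.rpow_mul hq]
    norm_num
  rw [h1, ← h2]
  exact Real.rpow_le_rpow (pow_nonneg hq 5) h (by norm_num)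

theorem stmt_14 (f : ℝ → ℝ → ℝ)
    (hf : ∀ x y, f x y = 27 * x * y * (x - y) ^ 2 - 4 * (x ^ 3 + y ^ 3)
      + 204 * x * y * (x + y) - 48 * (x ^ 2 - 7 * x * y + y ^ 2 + 4 * x + 4 * y) - 256) :
    0 < f ((0.5 : ℝ) ^ 2) ((2.7 : ℝ) ^ 2) ∧
      ¬ ConvexOn ℝ Set.univ
        (fun x : ℝ => ((x + 1) ^ 2 + 0.25) ^ ((1 : ℝ) / 2) *
          ((x - 1) ^ 2 + 7.29) ^ ((2.8 : ℝ))) := by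
  constructor
  · rw [hf]; norm_num
  · intro hconv
    set g : ℝ → ℝ := fun x : ℝ => ((x + 1) ^ 2 + 0.25) ^ ((1 : ℝ) / 2) *
          ((x - 1) ^ 2 + 7.29) ^ ((2.8 : ℝ)) with hg
    -- upper bound at a = -0.45
    have ha : g (-0.45) ≤ (1858259/2500000 : ℝ) * (41359702/78125 : ℝ) := by
      have e1 : ((-0.45 : ℝ) + 1) ^ 2 + 0.25 = 221/400 := by norm_num
      have e2 : ((-0.45 : ℝ) - 1) ^ 2 + 7.29 = 3757/400 := by norm_num
      simp only [hg, e1, e2]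
      exact mul_le_mul
        (rpow_half_le (by norm_num) (by norm_num) (by norm_num))
        (rpow_28_le (by norm_num) (by norm_num) (by norm_num))
        (Real.rpow_nonneg (by norm_num) _) (by norm_num)
    -- upper bound at b = 0.05
    have hb : g (0.05) ≤ (2325941/2000000 : ℝ) * (902622321/2500000 : ℝ) := by
      have e1 : ((0.05 : ℝ) + 1) ^ 2 + 0.25 = 541/400 := by norm_num
      have e2 : ((0.05 : ℝ) - 1) ^ 2 + 7.29 = 3277/400 := by norm_num
      simp only [hg, e1, e2]
      exact mul_le_mul
        (rpow_half_le (by norm_num) (by norm_num) (by norm_num))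
        (rpow_28_le (by norm_num) (by norm_num) (by norm_num))
        (Real.rpow_nonneg (by norm_num) _) (by norm_num)
    -- lower bound at m = -0.2
    have hm : (471699/500000 : ℝ) * (1078400029/2500000 : ℝ) ≤ g (-0.2) := by
      have e1 : ((-0.2 : ℝ) + 1) ^ 2 + 0.25 = 89/100 := by norm_num
      have e2 : ((-0.2 : ℝ) - 1) ^ 2 + 7.29 = 873/100 := by norm_num
      simp only [hg, e1, e2]
      exact mul_le_mul
        (le_rpow_half (by norm_num) (by norm_num))
        (le_rpow_28 (by norm_num) (by norm_num) (by norm_num))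
        (by norm_num)
        (Real.rpow_nonneg (by norm_num) _)
    have key := hconv.2 (Set.mem_univ (-0.45 : ℝ)) (Set.mem_univ (0.05 : ℝ))
      (by norm_num : (0:ℝ) ≤ 1/2) (by norm_num : (0:ℝ) ≤ 1/2) (by norm_num)
    have emid : (1/2 : ℝ) • (-0.45 : ℝ) + (1/2 : ℝ) • (0.05 : ℝ) = -0.2 := by
      norm_num
    rw [emid, smul_eq_mul, smul_eq_mul] at key
    nlinarith [key, ha, hb, hm]
end

section
/- Let z be a complex number with Im z > 0 and let a₁ < a < a₂ be real numbers with Arg(z - a) = (Arg(z - a₁) + Arg(z - a₂))/2, where Arg takes values in (0, π). Then: a₂ - a < a - a₁ if and only if Arg(z - a₁) + Arg(z - a₂) < π (equivalently a₁ + a₂ < 2 Re z). -/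
/-!
Write `θ t = arg (z - t)` for real `t`. Since `z.re - t = z.im * cot (θ t)`, the sine
subtraction formula gives `(t - s) sin (θ s) sin (θ t) = z.im sin (θ t - θ s)`, so `θ` is
strictly increasing. Reflecting in the vertical line through `z` shows
`π - θ a₂ = θ (2 Re z - a₂)`, hence `θ a₁ + θ a₂ < π ↔ a₁ + a₂ < 2 Re z`.
For the first equivalence, the same identity applied to `a₁ < a` and `a < a₂`, whose angle
differences agree by the bisector hypothesis, yields the angle-bisector theorem
`(a - a₁) ‖z - a₂‖ = (a₂ - a) ‖z - a₁‖`; so `a₂ - a < a - a₁` iff `z` is closer to `a₂` than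
to `a₁`, i.e. iff `a₁ + a₂ < 2 Re z`.
-/

open Real

namespace Complex

theorem arg_mem_Ioo_of_im_pos {w : ℂ} (hw : 0 < w.im) : arg w ∈ Set.Ioo 0 π :=
  ⟨lt_of_le_of_ne (arg_nonneg_iff.2 hw.le) fun h => hw.ne' (arg_eq_zero_iff.1 h.symm).2,
    arg_lt_pi_iff.2 (Or.inr hw.ne')⟩

theorem cos_arg_mul_im (w : ℂ) : Real.cos (arg w) * w.im = Real.sin (arg w) * w.re := by
  rcases eq_or_ne w 0 with rfl | hw
  · simp
  rw [cos_arg hw, sin_arg]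
  ring

variable {z : ℂ}

theorem norm_sub_ofReal_pos (hz : 0 < z.im) (t : ℝ) : 0 < ‖z - t‖ :=
  norm_pos_iff.2 fun h => hz.ne' (by simpa using congrArg im h)

theorem sub_mul_sin_arg_sub_ofReal_mul_sin (s t : ℝ) :
    (t - s) * (Real.sin (arg (z - s)) * Real.sin (arg (z - t))) =
      z.im * Real.sin (arg (z - t) - arg (z - s)) := by
  have hs := cos_arg_mul_im (z - s)
  have ht := cos_arg_mul_im (z - t)
  simp only [sub_re, sub_im, ofReal_re, ofReal_im, sub_zero] at hs ht
  rw [Real.sin_sub]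
  linear_combination Real.sin (arg (z - s)) * ht - Real.sin (arg (z - t)) * hs

theorem strictMono_arg_sub_ofReal (hz : 0 < z.im) : StrictMono fun t : ℝ => arg (z - t) := by
  intro s t hst
  have hθs := arg_mem_Ioo_of_im_pos (w := z - s) (by simpa using hz)
  have hθt := arg_mem_Ioo_of_im_pos (w := z - t) (by simpa using hz)
  have hsin : 0 < Real.sin (arg (z - t) - arg (z - s)) := by
    refine pos_of_mul_pos_right ?_ hz.le
    rw [← sub_mul_sin_arg_sub_ofReal_mul_sin]
    exact mul_pos (sub_pos.2 hst) (mul_pos (sin_pos_of_pos_of_lt_pi hθs.1 hθs.2)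
      (sin_pos_of_pos_of_lt_pi hθt.1 hθt.2))
  by_contra! hle
  have := sin_nonpos_of_nonpos_of_neg_pi_le (sub_nonpos.2 hle) (by linarith [hθt.1, hθs.2])
  linarith

theorem arg_sub_ofReal_reflect (hz : 0 < z.im) (t : ℝ) :
    arg (z - ↑(2 * z.re - t)) = π - arg (z - t) := by
  have hzt : 0 < (z - t).im := by simpa using hz
  have hreflect : z - ↑(2 * z.re - t) = -(starRingEnd ℂ) (z - t) := by
    apply Complex.ext <;> simp; ring
  rw [hreflect, arg_neg_eq_arg_add_pi_of_im_neg (by simpa using hzt), arg_conj,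
    if_neg (arg_mem_Ioo_of_im_pos hzt).2.ne]
  ring

theorem arg_sub_ofReal_add_arg_sub_ofReal_lt_pi_iff (hz : 0 < z.im) (s t : ℝ) :
    arg (z - s) + arg (z - t) < π ↔ s + t < 2 * z.re := by
  rw [← lt_sub_iff_add_lt, ← arg_sub_ofReal_reflect hz,
    (strictMono_arg_sub_ofReal hz).lt_iff_lt, lt_sub_iff_add_lt]

theorem norm_sub_ofReal_lt_norm_sub_ofReal_iff {s t : ℝ} (hst : s < t) :
    ‖z - t‖ < ‖z - s‖ ↔ s + t < 2 * z.re := by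
  rw [← sq_lt_sq₀ (norm_nonneg _) (norm_nonneg _), Complex.sq_norm, Complex.sq_norm, normSq_apply, normSq_apply]
  simp only [sub_re, sub_im, ofReal_re, ofReal_im, sub_zero]
  constructor <;> intro h <;> nlinarith

theorem angle_bisector_theorem (hz : 0 < z.im) {a₁ a a₂ : ℝ}
    (hbis : arg (z - a) = (arg (z - a₁) + arg (z - a₂)) / 2) :
    (a - a₁) * ‖z - a₂‖ = (a₂ - a) * ‖z - a₁‖ := by
  have hφ := arg_mem_Ioo_of_im_pos (w := z - a) (by simpa using hz)
  have hsinφ : Real.sin (arg (z - a)) ≠ 0 := (sin_pos_of_pos_of_lt_pi hφ.1 hφ.2).ne'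
  have hsin : (a - a₁) * Real.sin (arg (z - a₁)) = (a₂ - a) * Real.sin (arg (z - a₂)) := by
    refine mul_right_cancel₀ hsinφ ?_
    have h₁ := sub_mul_sin_arg_sub_ofReal_mul_sin (z := z) a₁ a
    have h₂ := sub_mul_sin_arg_sub_ofReal_mul_sin (z := z) a a₂
    have hdiff : arg (z - a) - arg (z - a₁) = arg (z - a₂) - arg (z - a) := by
      rw [hbis]; ring
    rw [hdiff] at h₁
    linear_combination h₁ - h₂
  rw [sin_arg, sin_arg] at hsin
  simp only [sub_im, ofReal_im, sub_zero] at hsin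
  field_simp [(norm_sub_ofReal_pos hz a₁).ne', (norm_sub_ofReal_pos hz a₂).ne'] at hsin
  linarith

end Complex

open Complex in
theorem stmt_16 (z : ℂ) (hz : 0 < z.im) (a₁ a a₂ : ℝ) (h₁ : a₁ < a) (h₂ : a < a₂)
    (hbis : Complex.arg (z - a) =
      (Complex.arg (z - a₁) + Complex.arg (z - a₂)) / 2) :
    (a₂ - a < a - a₁ ↔ Complex.arg (z - a₁) + Complex.arg (z - a₂) < Real.pi) ∧
      (Complex.arg (z - a₁) + Complex.arg (z - a₂) < Real.pi ↔ a₁ + a₂ < 2 * z.re) := by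
  have hsum := arg_sub_ofReal_add_arg_sub_ofReal_lt_pi_iff hz a₁ a₂
  refine ⟨?_, hsum⟩
  rw [hsum, ← norm_sub_ofReal_lt_norm_sub_ofReal_iff (h₁.trans h₂)]
  have hbisector := angle_bisector_theorem hz hbis
  have hnorm₁ := norm_sub_ofReal_pos hz a₁
  have hnorm₂ := norm_sub_ofReal_pos hz a₂
  constructor <;> intro h <;> nlinarith
end
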